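/- Let V be a partial isometry and T a contraction with T V*V = V (T extends V). Then C := V - T is a contraction satisfying ker(C)^⊥ ⊆ ker(V) and ran(C) ⊆ ran(V)^⊥. -/

import Mathlib

/-!
Put `P = V*V`, the projection onto the initial space of `V`. Then `T P = V = V P`, so
`C = V - T = T (P - 1)`: it is a contraction and vanishes on `ran P`, whose orthogonal complement
is `ker P = ker V`. A contraction that is isometric on a vector fixes it under `T*T`; as `T` is
isometric on `ran P`, this gives `T*V = T*T P = P`, hence `V*C = P - P = 0`, i.e. `ran C ⊥ ran V`.
-/

open ContinuousLinearMap

namespace ContinuousLinearMap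

variable {𝕜 E F G : Type*} [RCLike 𝕜]
  [NormedAddCommGroup E] [InnerProductSpace 𝕜 E] [CompleteSpace E]
  [NormedAddCommGroup F] [InnerProductSpace 𝕜 F] [CompleteSpace F]
  [NormedAddCommGroup G] [InnerProductSpace 𝕜 G]

theorem adjoint_apply_apply_eq_of_norm_apply_eq {T : E →L[𝕜] F} (hT : ‖T‖ ≤ 1) {x : E}
    (hx : ‖T x‖ = ‖x‖) : adjoint T (T x) = x := by
  have hnorm : ‖adjoint T (T x)‖ ≤ ‖x‖ :=
    calc ‖adjoint T (T x)‖ ≤ ‖T‖ * ‖T x‖ := by simpa using (adjoint T).le_opNorm (T x)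
      _ ≤ ‖x‖ := by rw [hx]; exact mul_le_of_le_one_left (norm_nonneg _) hT
  have hinner : RCLike.re (inner 𝕜 x (adjoint T (T x))) = ‖x‖ ^ 2 := by
    rw [adjoint_inner_right, inner_self_eq_norm_sq, hx]
  -- `‖x - T*T x‖² = ‖x‖² - 2 ‖T x‖² + ‖T*T x‖²` and `‖T*T x‖ ≤ ‖x‖`.
  have hsq : ‖x - adjoint T (T x)‖ ^ 2 ≤ 0 := by
    rw [@norm_sub_sq 𝕜, hinner]
    nlinarith [norm_nonneg (adjoint T (T x))]
  have hzero : ‖x - adjoint T (T x)‖ = 0 := by nlinarith [norm_nonneg (x - adjoint T (T x))]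
  exact (sub_eq_zero.mp (norm_eq_zero.mp hzero)).symm

theorem norm_apply_eq_of_adjoint_apply_apply_eq {V : E →L[𝕜] F} {x : E}
    (hx : adjoint V (V x) = x) : ‖V x‖ = ‖x‖ := by
  have := V.apply_norm_sq_eq_inner_adjoint_left x
  rw [comp_apply, hx, inner_self_eq_norm_sq] at this
  exact (pow_left_inj₀ (norm_nonneg _) (norm_nonneg _) two_ne_zero).mp this

theorem isStarProjection_adjoint_comp_self {V : E →L[𝕜] F}
    (hV : IsIdempotentElem (adjoint V ∘L V)) : IsStarProjection (adjoint V ∘L V) :=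
  ⟨hV, by rw [IsSelfAdjoint, star_eq_adjoint, adjoint_comp, adjoint_adjoint]⟩

theorem comp_adjoint_comp_self {V : E →L[𝕜] F} (hV : IsIdempotentElem (adjoint V ∘L V)) :
    V ∘L (adjoint V ∘L V) = V := by
  ext x
  have hker : x - (adjoint V ∘L V) x ∈ (adjoint V ∘L V).ker := by
    simp only [LinearMap.mem_ker, map_sub]
    exact sub_eq_zero.mpr (congr($(hV.eq) x)).symm
  rw [ker_adjoint_comp_self, LinearMap.mem_ker, map_sub, sub_eq_zero] at hker
  exact hker.symm

theorem adjoint_comp_eq_adjoint_comp_self_of_comp_eq {V T : E →L[𝕜] F}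
    (hV : IsIdempotentElem (adjoint V ∘L V)) (hT : ‖T‖ ≤ 1)
    (hext : T ∘L (adjoint V ∘L V) = V) : adjoint T ∘L V = adjoint V ∘L V := by
  ext x
  set p := (adjoint V ∘L V) x
  have hVx : V x = T p := congr($hext x).symm
  have hVp : ‖V p‖ = ‖p‖ := norm_apply_eq_of_adjoint_apply_apply_eq congr($(hV.eq) x)
  have hTp : ‖T p‖ = ‖p‖ := by
    rw [← hVx, ← hVp, ← comp_apply V, comp_adjoint_comp_self hV]
  rw [comp_apply, hVx, adjoint_apply_apply_eq_of_norm_apply_eq hT hTp]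

theorem orthogonal_ker_le_ker_of_comp_adjoint_comp_self_eq_zero {C : E →L[𝕜] G}
    {V : E →L[𝕜] F} (hC : C ∘L (adjoint V ∘L V) = 0) : C.kerᗮ ≤ V.ker :=
  calc C.kerᗮ ≤ (adjoint V ∘L V).rangeᗮ :=
        Submodule.orthogonal_le (by rintro _ ⟨x, rfl⟩; exact congr($hC x))
    _ = V.ker := by rw [orthogonal_range, adjoint_comp, adjoint_adjoint, ker_adjoint_comp_self]

theorem range_le_orthogonal_range_of_adjoint_comp_eq_zero {C : G →L[𝕜] F} {V : E →L[𝕜] F}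
    (hC : adjoint V ∘L C = 0) : C.range ≤ V.rangeᗮ := by
  rw [orthogonal_range]
  rintro _ ⟨x, rfl⟩
  exact congr($hC x)

end ContinuousLinearMap

theorem stmt_2 {J₁ J₂ : Type*}
    [NormedAddCommGroup J₁] [InnerProductSpace ℂ J₁] [CompleteSpace J₁]
    [NormedAddCommGroup J₂] [InnerProductSpace ℂ J₂] [CompleteSpace J₂]
    (V T : J₁ →L[ℂ] J₂)
    (hV : IsIdempotentElem ((adjoint V) ∘L V)) (hT : ‖T‖ ≤ 1)
    (hext : T ∘L ((adjoint V) ∘L V) = V) :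
    ‖V - T‖ ≤ 1 ∧
    (LinearMap.ker ((V - T : J₁ →L[ℂ] J₂) : J₁ →ₗ[ℂ] J₂))ᗮ ≤ LinearMap.ker (V : J₁ →ₗ[ℂ] J₂) ∧
    LinearMap.range ((V - T : J₁ →L[ℂ] J₂) : J₁ →ₗ[ℂ] J₂) ≤ (LinearMap.range (V : J₁ →ₗ[ℂ] J₂))ᗮ := by
  set P := adjoint V ∘L V
  have hP : IsStarProjection P := isStarProjection_adjoint_comp_self hV
  refine ⟨?_, ?_, ?_⟩
  · have hC : V - T = T ∘L (P - 1) := by rw [comp_sub, hext]; rfl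
    calc ‖V - T‖ ≤ ‖T‖ * ‖P - 1‖ := hC ▸ opNorm_comp_le T (P - 1)
      _ ≤ 1 * 1 := by
        gcongr
        rw [norm_sub_rev]
        exact hP.one_sub.norm_le
      _ = 1 := one_mul 1
  · have hCP : (V - T) ∘L P = 0 := by rw [sub_comp, hext, comp_adjoint_comp_self hV, sub_self]
    exact orthogonal_ker_le_ker_of_comp_adjoint_comp_self_eq_zero hCP
  · have hVT : adjoint V ∘L T = P := by
      have := congr(adjoint $(adjoint_comp_eq_adjoint_comp_self_of_comp_eq hV hT hext))
      rwa [adjoint_comp, adjoint_adjoint, ← star_eq_adjoint P, hP.isSelfAdjoint.star_eq] at this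
    have hVC : adjoint V ∘L (V - T) = 0 := by rw [comp_sub, hVT, sub_self]
    exact range_le_orthogonal_range_of_adjoint_comp_eq_zero hVC
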